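/- Let k⁰⁰, k¹¹, k²² > 0 be kernel constants. Then the function f : (0,1] → ℝ defined by f(ρ) = ρ^{−1/2}·g(ρ) is strictly decreasing on the interval (0,1]. -/

import Mathlib

/-- `p(ρ) = (1 + (1 + 3d/ρ²)^{1/2})^{1/2}` with `d = k⁰⁰k²²/(k¹¹)²`. -/
noncomputable def pKer (k00 k11 k22 ρ : ℝ) : ℝ :=
  (1 + (1 + 3 * (k00 * k22 / k11 ^ 2) / ρ ^ 2) ^ ((1 : ℝ) / 2)) ^ ((1 : ℝ) / 2)

/-- `g(ρ) = (16/3)(ρ k⁰⁰ k¹¹)^{1/2}(1/p(ρ) + p(ρ))`. -/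
noncomputable def gKer (k00 k11 k22 ρ : ℝ) : ℝ :=
  (16 / 3) * (ρ * k00 * k11) ^ ((1 : ℝ) / 2) *
    (1 / pKer k00 k11 k22 ρ + pKer k00 k11 k22 ρ)

lemma pKer_gt_one (k00 k11 k22 ρ : ℝ) (h00 : 0 < k00) (h11 : 0 < k11) (h22 : 0 < k22)
    (hρ : 0 < ρ) : 1 < pKer k00 k11 k22 ρ := by
  have hd : 0 < 3 * (k00 * k22 / k11 ^ 2) / ρ ^ 2 := by positivity
  have h1 : (1:ℝ) ≤ (1 + 3 * (k00 * k22 / k11 ^ 2) / ρ ^ 2) ^ ((1 : ℝ) / 2) := by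
    exact Real.one_le_rpow (by linarith) (by norm_num)
  unfold pKer
  rw [Real.one_lt_rpow_iff_of_pos (by linarith)]
  left; constructor <;> [linarith; norm_num]

lemma pKer_anti (k00 k11 k22 x y : ℝ) (h00 : 0 < k00) (h11 : 0 < k11) (h22 : 0 < k22)
    (hx : 0 < x) (hxy : x < y) : pKer k00 k11 k22 y < pKer k00 k11 k22 x := by
  have hd : 0 < k00 * k22 / k11 ^ 2 := by positivity
  have hy : 0 < y := lt_trans hx hxy
  have h1 : 3 * (k00 * k22 / k11 ^ 2) / y ^ 2 < 3 * (k00 * k22 / k11 ^ 2) / x ^ 2 := by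
    apply div_lt_div_of_pos_left (by positivity) (by positivity)
    nlinarith
  have h2 : (1 + 3 * (k00 * k22 / k11 ^ 2) / y ^ 2) ^ ((1:ℝ)/2)
      < (1 + 3 * (k00 * k22 / k11 ^ 2) / x ^ 2) ^ ((1:ℝ)/2) :=
    Real.rpow_lt_rpow (by positivity) (by linarith) (by norm_num)
  exact Real.rpow_lt_rpow (by positivity) (by linarith) (by norm_num)

/-- The function `ρ ↦ ρ^{-1/2} g(ρ)` is strictly decreasing on `(0,1]`. -/
theorem stmt3 (k00 k11 k22 : ℝ) (h00 : 0 < k00) (h11 : 0 < k11) (h22 : 0 < k22) :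
    StrictAntiOn (fun ρ : ℝ => ρ ^ (-(1 : ℝ) / 2) * gKer k00 k11 k22 ρ)
      (Set.Ioc 0 1) := by
  intro x hx y hy hxy
  have hx0 : 0 < x := hx.1
  have hy0 : 0 < y := hy.1
  -- rewrite f ρ = C * (1/p + p)
  have key : ∀ ρ : ℝ, 0 < ρ → ρ ^ (-(1 : ℝ) / 2) * gKer k00 k11 k22 ρ =
      (16 / 3) * (k00 * k11) ^ ((1 : ℝ) / 2) *
        (1 / pKer k00 k11 k22 ρ + pKer k00 k11 k22 ρ) := by
    intro ρ hρ
    unfold gKer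
    have : (ρ * k00 * k11) ^ ((1 : ℝ) / 2) = ρ ^ ((1:ℝ)/2) * (k00 * k11) ^ ((1:ℝ)/2) := by
      rw [mul_assoc, Real.mul_rpow hρ.le (by positivity)]
    rw [this]
    have : ρ ^ (-(1 : ℝ) / 2) * ρ ^ ((1:ℝ)/2) = 1 := by
      rw [← Real.rpow_add hρ]; norm_num
    calc ρ ^ (-(1 : ℝ) / 2) * (16 / 3 * (ρ ^ ((1:ℝ)/2) * (k00 * k11) ^ ((1:ℝ)/2)) *
          (1 / pKer k00 k11 k22 ρ + pKer k00 k11 k22 ρ))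
        = (ρ ^ (-(1 : ℝ) / 2) * ρ ^ ((1:ℝ)/2)) * (16 / 3 * (k00 * k11) ^ ((1:ℝ)/2) *
          (1 / pKer k00 k11 k22 ρ + pKer k00 k11 k22 ρ)) := by ring
      _ = _ := by rw [this]; ring
  simp only [key x hx0, key y hy0]
  have hC : (0:ℝ) < 16 / 3 * (k00 * k11) ^ ((1:ℝ)/2) := by positivity
  apply mul_lt_mul_of_pos_left _ hC
  set a := pKer k00 k11 k22 y
  set b := pKer k00 k11 k22 x
  have ha1 : 1 < a := pKer_gt_one _ _ _ _ h00 h11 h22 hy0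
  have hb1 : 1 < b := pKer_gt_one _ _ _ _ h00 h11 h22 hx0
  have hab : a < b := pKer_anti _ _ _ _ _ h00 h11 h22 hx0 hxy
  have ha0 : 0 < a := by linarith
  have hb0 : 0 < b := by linarith
  have e1 : 1 / a + a = (1 + a ^ 2) / a := by field_simp
  have e2 : 1 / b + b = (1 + b ^ 2) / b := by field_simp
  rw [e1, e2, div_lt_div_iff₀ ha0 hb0]
  nlinarith [mul_pos (sub_pos.2 hab) (show (0:ℝ) < a * b - 1 by nlinarith)]
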